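/- arXiv:1902.10346 — 6 statements merged into one kernel-verified Lean document; each statement's English description precedes it below -/
import Mathlib

section
/- For α > -1, the function f(σ) = ∫₀^∞ e^{-σ(cosh θ - 1)} (sinh θ)^α dθ satisfies f(σ) = 2^{(α-1)/2} Γ((α+1)/2) σ^{-(α+1)/2} (1 + O(1/σ)) as σ → ∞. -/
/-!
With `β = (α - 1) / 2`, the substitution `u = cosh θ - 1` (so `du = sinh θ dθ` and
`sinh² θ = 2u (1 + u/2)`) turns `f σ` into `2^β ∫₀^∞ e^{-σu} u^β (1 + u/2)^β du`.
Replacing `(1 + u/2)^β` by `1` gives exactly `2^β Γ(β+1) σ^{-(β+1)}`, and since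
`|(1 + v)^β - 1| ≤ |β| v e^{|β| v}`, the error is bounded by a Gamma integral of order
`σ^{-(β+2)}`: this is the first-order case of Watson's lemma.
-/

open Real MeasureTheory Set

theorem abs_exp_sub_one_le_abs_mul_exp_abs (x : ℝ) : |exp x - 1| ≤ |x| * exp |x| := by
  rcases le_total 0 x with hx | hx
  · rw [abs_of_nonneg hx, abs_of_nonneg (sub_nonneg.mpr (one_le_exp hx))]
    have hinv : exp (-x) * exp x = 1 := by rw [← exp_add, neg_add_cancel, exp_zero]
    nlinarith [one_sub_le_exp_neg x, exp_pos x]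
  · rw [abs_of_nonpos hx, abs_of_nonpos (sub_nonpos.mpr (exp_le_one_iff.mpr hx))]
    nlinarith [add_one_le_exp x, one_le_exp (neg_nonneg.mpr hx)]

theorem abs_one_add_rpow_sub_one_le (β : ℝ) {v : ℝ} (hv : 0 ≤ v) :
    |(1 + v) ^ β - 1| ≤ |β| * v * exp (|β| * v) := by
  have hlog : |log (1 + v) * β| ≤ |β| * v := by
    rw [abs_mul, abs_of_nonneg (log_nonneg (by linarith)), mul_comm]
    gcongr
    linarith [log_le_sub_one_of_pos (show 0 < 1 + v by linarith)]
  rw [rpow_def_of_pos (by linarith)]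
  calc |exp (log (1 + v) * β) - 1| ≤ |log (1 + v) * β| * exp |log (1 + v) * β| :=
        abs_exp_sub_one_le_abs_mul_exp_abs _
    _ ≤ |β| * v * exp (|β| * v) := by gcongr

theorem integrableOn_exp_neg_mul_mul_rpow {β σ : ℝ} (hβ : -1 < β) (hσ : 0 < σ) :
    IntegrableOn (fun u => exp (-σ * u) * u ^ β) (Ioi 0) := by
  simpa [rpow_one, mul_comm] using integrableOn_rpow_mul_exp_neg_mul_rpow hβ one_pos hσ

theorem integral_exp_neg_mul_mul_rpow {β σ : ℝ} (hβ : -1 < β) (hσ : 0 < σ) :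
    ∫ u in Ioi 0, exp (-σ * u) * u ^ β = Gamma (β + 1) / σ ^ (β + 1) := by
  have h := integral_rpow_mul_exp_neg_mul_Ioi (a := β + 1) (by linarith) hσ
  rw [add_sub_cancel_right, one_div, inv_rpow hσ.le, inv_mul_eq_div] at h
  simpa [mul_comm] using h

theorem abs_integral_exp_neg_mul_rpow_mul_sub_le {β A B σ : ℝ} {φ : ℝ → ℝ}
    (hβ : -1 < β) (hφm : Measurable φ) (hφ : ∀ u > 0, |φ u - 1| ≤ A * u * exp (B * u))
    (hσ : 0 < σ) (hσB : 2 * B ≤ σ) :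
    |(∫ u in Ioi 0, exp (-σ * u) * u ^ β * φ u) - Gamma (β + 1) / σ ^ (β + 1)|
      ≤ A * Gamma (β + 2) / (σ / 2) ^ (β + 2) := by
  have hA : 0 ≤ A := by
    have h1 := (abs_nonneg _).trans (hφ 1 one_pos)
    rw [mul_one] at h1
    exact (mul_nonneg_iff_of_pos_right (exp_pos _)).mp h1
  have hmaj : ∀ u ∈ Ioi (0 : ℝ),
      ‖exp (-σ * u) * u ^ β * (φ u - 1)‖ ≤ A * (exp (-(σ / 2) * u) * u ^ (β + 1)) := by
    intro u (hu : 0 < u)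
    rw [norm_mul, norm_of_nonneg (by positivity), norm_eq_abs]
    calc exp (-σ * u) * u ^ β * |φ u - 1|
        ≤ exp (-σ * u) * u ^ β * (A * u * exp (B * u)) := by gcongr; exact hφ u hu
      _ = A * (exp (-σ * u + B * u) * u ^ (β + 1)) := by
          rw [exp_add, rpow_add_one hu.ne']; ring
      _ ≤ A * (exp (-(σ / 2) * u) * u ^ (β + 1)) := by
          gcongr; nlinarith
  have hmaj_int : IntegrableOn (fun u => A * (exp (-(σ / 2) * u) * u ^ (β + 1))) (Ioi 0) :=
    (integrableOn_exp_neg_mul_mul_rpow (by linarith) (by positivity)).const_mul A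
  have herr_int : IntegrableOn (fun u => exp (-σ * u) * u ^ β * (φ u - 1)) (Ioi 0) :=
    hmaj_int.mono' (by fun_prop) (ae_restrict_of_forall_mem measurableSet_Ioi hmaj)
  have hsplit : ∫ u in Ioi 0, exp (-σ * u) * u ^ β * φ u
      = Gamma (β + 1) / σ ^ (β + 1) + ∫ u in Ioi 0, exp (-σ * u) * u ^ β * (φ u - 1) := by
    rw [← integral_exp_neg_mul_mul_rpow hβ hσ,
      ← integral_add (integrableOn_exp_neg_mul_mul_rpow hβ hσ) herr_int]
    ring_nf
  rw [hsplit, add_sub_cancel_left, ← norm_eq_abs]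
  calc ‖∫ u in Ioi 0, exp (-σ * u) * u ^ β * (φ u - 1)‖
      ≤ ∫ u in Ioi 0, A * (exp (-(σ / 2) * u) * u ^ (β + 1)) :=
        norm_integral_le_of_norm_le hmaj_int (ae_restrict_of_forall_mem measurableSet_Ioi hmaj)
    _ = A * Gamma (β + 2) / (σ / 2) ^ (β + 2) := by
        rw [integral_const_mul, integral_exp_neg_mul_mul_rpow (by linarith) (by positivity),
          show β + 1 + 1 = β + 2 by ring, mul_div_assoc]

theorem abs_rpow_div_Gamma_mul_integral_exp_neg_mul_rpow_mul_sub_one_le {β A B σ : ℝ}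
    {φ : ℝ → ℝ} (hβ : -1 < β) (hφm : Measurable φ)
    (hφ : ∀ u > 0, |φ u - 1| ≤ A * u * exp (B * u)) (hσ : 0 < σ) (hσB : 2 * B ≤ σ) :
    |σ ^ (β + 1) / Gamma (β + 1) * (∫ u in Ioi 0, exp (-σ * u) * u ^ β * φ u) - 1|
      ≤ A * (β + 1) * 2 ^ (β + 2) / σ := by
  have hΓ : 0 < Gamma (β + 1) := Gamma_pos_of_pos (by linarith)
  have hσβ : 0 < σ ^ (β + 1) := by positivity
  have hΓ_succ : Gamma (β + 2) = (β + 1) * Gamma (β + 1) := by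
    rw [show β + 2 = β + 1 + 1 by ring, Gamma_add_one (by linarith)]
  have hscale : (σ / 2) ^ (β + 2) = σ ^ (β + 1) * σ / 2 ^ (β + 2) := by
    rw [div_rpow hσ.le zero_le_two, show β + 2 = β + 1 + 1 by ring, rpow_add_one hσ.ne']
  calc |σ ^ (β + 1) / Gamma (β + 1) * (∫ u in Ioi 0, exp (-σ * u) * u ^ β * φ u) - 1|
      = σ ^ (β + 1) / Gamma (β + 1)
          * |(∫ u in Ioi 0, exp (-σ * u) * u ^ β * φ u) - Gamma (β + 1) / σ ^ (β + 1)| := by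
        rw [← abs_of_pos (div_pos hσβ hΓ), ← abs_mul, abs_of_pos (div_pos hσβ hΓ)]
        congr 1
        field_simp
    _ ≤ σ ^ (β + 1) / Gamma (β + 1) * (A * Gamma (β + 2) / (σ / 2) ^ (β + 2)) := by
        gcongr
        exact abs_integral_exp_neg_mul_rpow_mul_sub_le hβ hφm hφ hσ hσB
    _ = A * (β + 1) * 2 ^ (β + 2) / σ := by
        rw [hΓ_succ, hscale]
        field_simp

theorem integral_Ioi_comp_cosh_sub_one_mul_sinh (g : ℝ → ℝ) :
    ∫ θ in Ioi 0, g (cosh θ - 1) * sinh θ = ∫ u in Ioi 0, g u := by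
  have himage : (fun θ => cosh θ - 1) '' Ici 0 = Ici 0 := by
    rw [← image_image (fun x : ℝ => x - 1) cosh, cosh_bijOn.image_eq, image_sub_const_Ici,
      sub_self]
  calc ∫ θ in Ioi 0, g (cosh θ - 1) * sinh θ
      = ∫ θ in Ici 0, |sinh θ| • g (cosh θ - 1) := by
        rw [integral_Ici_eq_integral_Ioi]
        refine setIntegral_congr_fun measurableSet_Ioi fun θ (hθ : 0 < θ) => ?_
        rw [abs_of_pos (sinh_pos_iff.mpr hθ), smul_eq_mul, mul_comm]
    _ = ∫ u in (fun θ => cosh θ - 1) '' Ici 0, g u :=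
        (integral_image_eq_integral_abs_deriv_smul measurableSet_Ici
          (fun θ _ => ((hasDerivAt_cosh θ).sub_const 1).hasDerivWithinAt)
          (fun x hx y hy h => cosh_injOn hx hy (sub_left_inj.mp h)) g).symm
    _ = ∫ u in Ioi 0, g u := by rw [himage, integral_Ici_eq_integral_Ioi]

theorem rpow_eq_sq_rpow_mul {x : ℝ} (hx : 0 < x) (α : ℝ) :
    x ^ α = (x ^ 2) ^ ((α - 1) / 2) * x := by
  rw [← rpow_natCast, ← rpow_mul hx.le, ← rpow_add_one hx.ne']
  congr 1
  push_cast
  ring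

theorem sinh_rpow_eq_cosh_sub_one_rpow_mul_sinh {θ : ℝ} (hθ : 0 < θ) (α : ℝ) :
    sinh θ ^ α = 2 ^ ((α - 1) / 2)
      * ((cosh θ - 1) ^ ((α - 1) / 2) * (1 + (cosh θ - 1) / 2) ^ ((α - 1) / 2)) * sinh θ := by
  have hu : 0 < cosh θ - 1 := sub_pos.mpr (one_lt_cosh.mpr hθ.ne')
  have hsq : sinh θ ^ 2 = 2 * ((cosh θ - 1) * (1 + (cosh θ - 1) / 2)) := by
    nlinarith [cosh_sq θ]
  rw [rpow_eq_sq_rpow_mul (sinh_pos_iff.mpr hθ), hsq, mul_rpow zero_le_two (by positivity),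
    mul_rpow hu.le (by positivity)]

theorem integral_exp_neg_mul_cosh_sub_one_mul_sinh_rpow (σ α : ℝ) :
    ∫ θ in Ioi 0, exp (-σ * (cosh θ - 1)) * sinh θ ^ α
      = 2 ^ ((α - 1) / 2) * ∫ u in Ioi 0,
          exp (-σ * u) * u ^ ((α - 1) / 2) * (1 + u / 2) ^ ((α - 1) / 2) := by
  rw [← integral_const_mul, ← integral_Ioi_comp_cosh_sub_one_mul_sinh fun u =>
    2 ^ ((α - 1) / 2) * (exp (-σ * u) * u ^ ((α - 1) / 2) * (1 + u / 2) ^ ((α - 1) / 2))]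
  refine setIntegral_congr_fun measurableSet_Ioi fun θ (hθ : 0 < θ) => ?_
  rw [sinh_rpow_eq_cosh_sub_one_rpow_mul_sinh hθ]
  ring

theorem stmt0 (α : ℝ) (hα : -1 < α) (f : ℝ → ℝ)
    (hf : ∀ σ : ℝ, f σ =
      ∫ θ in Ioi (0:ℝ), Real.exp (-σ * (Real.cosh θ - 1)) * Real.sinh θ ^ α) :
    ∃ C σ₀ : ℝ, 0 < C ∧ 0 < σ₀ ∧ ∀ σ : ℝ, σ₀ ≤ σ →
      |f σ * σ ^ ((α + 1) / 2) / ((2:ℝ) ^ ((α - 1) / 2) * Real.Gamma ((α + 1) / 2)) - 1|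
        ≤ C / σ := by
  set β := (α - 1) / 2 with hβ_def
  have hβ : -1 < β := by linarith
  have hα_β : (α + 1) / 2 = β + 1 := by ring
  have hC : 0 ≤ |β| / 2 * (β + 1) * 2 ^ (β + 2) :=
    mul_nonneg (mul_nonneg (by positivity) (by linarith)) (by positivity)
  refine ⟨|β| / 2 * (β + 1) * 2 ^ (β + 2) + 1, |β| + 1, by positivity, by positivity,
    fun σ hσ => ?_⟩
  have hσ0 : 0 < σ := by linarith [abs_nonneg β]
  have hφ : ∀ u > 0, |(1 + u / 2) ^ β - 1| ≤ |β| / 2 * u * exp (|β| / 2 * u) := by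
    intro u hu
    exact (abs_one_add_rpow_sub_one_le β (by positivity : 0 ≤ u / 2)).trans_eq (by ring_nf)
  have hbound := abs_rpow_div_Gamma_mul_integral_exp_neg_mul_rpow_mul_sub_one_le hβ
    (by fun_prop) hφ hσ0 (by linarith [abs_nonneg β])
  rw [hf σ, integral_exp_neg_mul_cosh_sub_one_mul_sinh_rpow, ← hβ_def, hα_β]
  calc _ = |σ ^ (β + 1) / Gamma (β + 1)
          * (∫ u in Ioi 0, exp (-σ * u) * u ^ β * (1 + u / 2) ^ β) - 1| := by
        congr 2
        field_simp
    _ ≤ _ := hbound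
    _ ≤ _ := by gcongr; linarith
end

section
/- For α > 0, the function f(σ) = ∫₀^∞ e^{-σ(cosh θ - 1)} (sinh θ)^α dθ satisfies f(σ) = σ^{-α} Γ(α)(1 + o(1)) as σ → 0⁺. -/
/-!
Substituting `t = σ (cosh θ - 1)`, so that `σ sinh θ = √(t (t + 2σ))`, turns `σ ^ α f(σ)` into
`∫₀^∞ e^{-t} √(t (t + 2σ)) ^ (α - 1) dt`. As `t ≤ √(t (t + 2σ)) ≤ t + σ`, this integral lies
between `Γ(α) = ∫₀^∞ e^{-t} t ^ (α - 1) dt` and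
`∫₀^∞ e^{-t} (t + σ) ^ (α - 1) dt = e^σ ∫_σ^∞ e^{-s} s ^ (α - 1) ds`,
and the latter tends to `Γ(α)` as `σ → 0⁺`.
-/

open Real MeasureTheory Set Filter Topology

section SetIntegral

variable {E : Type*} [NormedAddCommGroup E]

theorem tendsto_setIntegral_Ioi_nhdsGT [NormedSpace ℝ E] {μ : Measure ℝ} {f : ℝ → E} {a : ℝ}
    (hf : IntegrableOn f (Ioi a) μ) :
    Tendsto (fun b => ∫ x in Ioi b, f x ∂μ) (𝓝[>] a) (𝓝 (∫ x in Ioi a, f x ∂μ)) := by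
  have hind : ∀ b ∈ Ioi a, ∫ x in Ioi a, (Ioi b).indicator f x ∂μ = ∫ x in Ioi b, f x ∂μ := by
    intro b hb
    rw [setIntegral_indicator measurableSet_Ioi, Ioi_inter_Ioi, max_eq_right (le_of_lt hb)]
  refine Tendsto.congr' (eventually_nhdsWithin_of_forall hind) ?_
  refine tendsto_integral_filter_of_dominated_convergence (‖f ·‖)
    (Eventually.of_forall fun b => hf.aestronglyMeasurable.indicator measurableSet_Ioi)
    (Eventually.of_forall fun b => Eventually.of_forall fun x => norm_indicator_le_norm_self f x)
    hf.norm ?_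
  filter_upwards [ae_restrict_mem measurableSet_Ioi] with x hx
  refine tendsto_const_nhds.congr' ?_
  filter_upwards [eventually_nhdsWithin_of_eventually_nhds (eventually_lt_nhds hx)] with b hb
  exact (indicator_of_mem hb f).symm

theorem setIntegral_Ioi_comp_add_right [NormedSpace ℝ E] (g : ℝ → E) (a c : ℝ) :
    ∫ x in Ioi a, g (x + c) = ∫ x in Ioi (a + c), g x := by
  simpa only [preimage_add_const_Ioi, add_sub_cancel_right] using
    (measurePreserving_add_right volume c).setIntegral_preimage_emb
      (measurableEmbedding_addRight c) g (Ioi (a + c))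

theorem integrableOn_Ioi_comp_add_right {g : ℝ → E} {a c : ℝ} :
    IntegrableOn (fun x => g (x + c)) (Ioi a) ↔ IntegrableOn g (Ioi (a + c)) := by
  have h := (measurePreserving_add_right volume c).integrableOn_comp_preimage
    (measurableEmbedding_addRight c) (f := g) (s := Ioi (a + c))
  rwa [preimage_add_const_Ioi, add_sub_cancel_right] at h

end SetIntegral

theorem setIntegral_mem_Icc_of_mem_Icc {X : Type*} [MeasurableSpace X] {μ : Measure X}
    {s : Set X} (hs : MeasurableSet s) {f g₁ g₂ : X → ℝ}
    (hf : AEStronglyMeasurable f (μ.restrict s)) (hg₁ : IntegrableOn g₁ s μ)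
    (hg₂ : IntegrableOn g₂ s μ) (h : ∀ x ∈ s, f x ∈ Icc (g₁ x) (g₂ x)) :
    ∫ x in s, f x ∂μ ∈ Icc (∫ x in s, g₁ x ∂μ) (∫ x in s, g₂ x ∂μ) := by
  have hfi : IntegrableOn f s μ :=
    integrable_of_le_of_le hf
      ((ae_restrict_iff' hs).2 (Eventually.of_forall fun x hx => (h x hx).1))
      ((ae_restrict_iff' hs).2 (Eventually.of_forall fun x hx => (h x hx).2)) hg₁ hg₂
  exact ⟨setIntegral_mono_on hg₁ hfi hs fun x hx => (h x hx).1,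
    setIntegral_mono_on hfi hg₂ hs fun x hx => (h x hx).2⟩

theorem exp_neg_mul_add_rpow (σ p t : ℝ) :
    exp (-t) * (t + σ) ^ p = exp σ * (exp (-(t + σ)) * (t + σ) ^ p) := by
  rw [← mul_assoc, ← exp_add]
  ring_nf

theorem setIntegral_exp_neg_mul_add_rpow (σ p : ℝ) :
    ∫ t in Ioi 0, exp (-t) * (t + σ) ^ p = exp σ * ∫ t in Ioi σ, exp (-t) * t ^ p := by
  simp_rw [exp_neg_mul_add_rpow σ p, integral_const_mul,
    setIntegral_Ioi_comp_add_right (fun t => exp (-t) * t ^ p), zero_add]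

theorem integrableOn_exp_neg_mul_add_rpow {α σ : ℝ} (hα : 0 < α) (hσ : 0 ≤ σ) :
    IntegrableOn (fun t => exp (-t) * (t + σ) ^ (α - 1)) (Ioi 0) := by
  simp_rw [exp_neg_mul_add_rpow σ (α - 1)]
  refine Integrable.const_mul
    ((integrableOn_Ioi_comp_add_right (g := fun t => exp (-t) * t ^ (α - 1))).2 ?_) _
  rw [zero_add]
  exact (GammaIntegral_convergent hα).mono_set (Ioi_subset_Ioi hσ)

theorem rpow_mul_setIntegral_exp_cosh_mul_sinh_rpow {σ : ℝ} (hσ : 0 < σ) (α : ℝ) :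
    σ ^ α * ∫ θ in Ioi 0, exp (-σ * (cosh θ - 1)) * sinh θ ^ α =
      ∫ t in Ioi 0, exp (-t) * √(t * (t + 2 * σ)) ^ (α - 1) := by
  set φ : ℝ → ℝ := fun θ => σ * (cosh θ - 1)
  have hφ : φ '' Ioi 0 = Ioi 0 := by
    refine (image_subset_iff.2 fun θ hθ => ?_).antisymm fun t ht => ?_
    · exact mul_pos hσ (sub_pos.2 (one_lt_cosh.2 (ne_of_gt hθ)))
    · have h1 : 1 < 1 + t / σ := lt_add_of_pos_right 1 (div_pos ht hσ)
      refine ⟨arcosh (1 + t / σ), arcosh_pos h1, ?_⟩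
      simp only [φ, cosh_arcosh h1.le]
      field_simp
      ring
  have hinj : InjOn φ (Ioi 0) := fun a ha b hb h =>
    cosh_injOn (Ioi_subset_Ici_self ha) (Ioi_subset_Ici_self hb) (by simpa [φ, hσ.ne'] using h)
  rw [← integral_const_mul]
  conv_rhs => rw [← hφ, integral_image_eq_integral_abs_deriv_smul measurableSet_Ioi
    (fun θ _ => (((hasDerivAt_cosh θ).sub_const 1).const_mul σ).hasDerivWithinAt) hinj]
  refine setIntegral_congr_fun measurableSet_Ioi fun θ hθ => ?_
  have hsinh : 0 < sinh θ := sinh_pos_iff.2 hθ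
  have hs : 0 < σ * sinh θ := mul_pos hσ hsinh
  have hsqrt : √(φ θ * (φ θ + 2 * σ)) = σ * sinh θ := by
    rw [← sqrt_sq hs.le]
    congr 1
    simp only [φ]
    linear_combination σ ^ 2 * cosh_sq θ
  simp only [smul_eq_mul, hsqrt, abs_of_pos hs, rpow_sub_one hs.ne', mul_rpow hσ.le hsinh.le, φ]
  field_simp

theorem setIntegral_exp_neg_mul_rpow_mem_uIcc {α σ : ℝ} (hα : 0 < α) (hσ : 0 ≤ σ) {y : ℝ → ℝ}
    (hy : Measurable y) (hy_mem : ∀ t ∈ Ioi (0 : ℝ), y t ∈ Icc t (t + σ)) :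
    ∫ t in Ioi 0, exp (-t) * y t ^ (α - 1) ∈
      uIcc (Gamma α) (∫ t in Ioi 0, exp (-t) * (t + σ) ^ (α - 1)) := by
  have hmeas : AEStronglyMeasurable (fun t => exp (-t) * y t ^ (α - 1))
      (volume.restrict (Ioi 0)) :=
    (by fun_prop : Measurable fun t => exp (-t) * y t ^ (α - 1)).aestronglyMeasurable
  have hΓ := GammaIntegral_convergent hα
  have hshift := integrableOn_exp_neg_mul_add_rpow hα hσ
  rw [Gamma_eq_integral hα, mem_uIcc]
  rcases le_total 0 (α - 1) with hp | hp
  · refine Or.inl (setIntegral_mem_Icc_of_mem_Icc measurableSet_Ioi hmeas hΓ hshift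
      fun t (ht : 0 < t) => ?_)
    obtain ⟨hty, hyt⟩ := hy_mem t ht
    exact ⟨mul_le_mul_of_nonneg_left (rpow_le_rpow ht.le hty hp) (exp_pos _).le,
      mul_le_mul_of_nonneg_left (rpow_le_rpow (ht.le.trans hty) hyt hp) (exp_pos _).le⟩
  · refine Or.inr (setIntegral_mem_Icc_of_mem_Icc measurableSet_Ioi hmeas hshift hΓ
      fun t (ht : 0 < t) => ?_)
    obtain ⟨hty, hyt⟩ := hy_mem t ht
    exact ⟨mul_le_mul_of_nonneg_left (rpow_le_rpow_of_nonpos (ht.trans_le hty) hyt hp)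
        (exp_pos _).le,
      mul_le_mul_of_nonneg_left (rpow_le_rpow_of_nonpos ht hty hp) (exp_pos _).le⟩

theorem tendsto_rpow_mul_setIntegral_exp_cosh_mul_sinh_rpow {α : ℝ} (hα : 0 < α) :
    Tendsto (fun σ => σ ^ α * ∫ θ in Ioi 0, exp (-σ * (cosh θ - 1)) * sinh θ ^ α) (𝓝[>] 0)
      (𝓝 (Gamma α)) := by
  set H : ℝ → ℝ := fun σ => exp σ * ∫ t in Ioi σ, exp (-t) * t ^ (α - 1)
  have hH : Tendsto H (𝓝[>] 0) (𝓝 (Gamma α)) := by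
    have := (continuous_exp.tendsto 0).mono_left nhdsWithin_le_nhds |>.mul
      (tendsto_setIntegral_Ioi_nhdsGT (GammaIntegral_convergent hα))
    rwa [exp_zero, one_mul, ← Gamma_eq_integral hα] at this
  have hbound : ∀ σ ∈ Ioi (0 : ℝ),
      |(σ ^ α * ∫ θ in Ioi 0, exp (-σ * (cosh θ - 1)) * sinh θ ^ α) - Gamma α| ≤
        |H σ - Gamma α| := by
    intro σ hσ
    have hσ : 0 < σ := hσ
    rw [rpow_mul_setIntegral_exp_cosh_mul_sinh_rpow hσ α]
    simp only [H, ← setIntegral_exp_neg_mul_add_rpow]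
    refine abs_sub_left_of_mem_uIcc (setIntegral_exp_neg_mul_rpow_mem_uIcc hα hσ.le
      (by fun_prop) fun t (ht : 0 < t) => ⟨?_, ?_⟩)
    · exact (le_sqrt ht.le (by positivity)).2 (by nlinarith)
    · exact (sqrt_le_left (by positivity)).2 (by nlinarith)
  rw [tendsto_iff_norm_sub_tendsto_zero] at hH ⊢
  simp only [Real.norm_eq_abs] at hH ⊢
  exact squeeze_zero' (Eventually.of_forall fun _ => abs_nonneg _)
    (eventually_nhdsWithin_of_forall hbound) hH

theorem stmt2 (α : ℝ) (hα : 0 < α) (f : ℝ → ℝ)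
    (hf : ∀ σ : ℝ, f σ =
      ∫ θ in Ioi (0:ℝ), Real.exp (-σ * (Real.cosh θ - 1)) * Real.sinh θ ^ α) :
    ∀ ε : ℝ, 0 < ε → ∃ σ₀ : ℝ, 0 < σ₀ ∧ ∀ σ : ℝ, 0 < σ → σ < σ₀ →
      |f σ * σ ^ α / Real.Gamma α - 1| ≤ ε := by
  have hΓ : Gamma α ≠ 0 := (Gamma_pos_of_pos hα).ne'
  have hlim : Tendsto (fun σ => f σ * σ ^ α / Gamma α) (𝓝[>] 0) (𝓝 1) := by
    have h := (tendsto_rpow_mul_setIntegral_exp_cosh_mul_sinh_rpow hα).div_const (Gamma α)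
    rw [div_self hΓ] at h
    exact h.congr fun σ => by rw [hf, mul_comm]
  intro ε hε
  obtain ⟨δ, hδ, hlt⟩ := Metric.tendsto_nhdsWithin_nhds.1 hlim ε hε
  refine ⟨δ, hδ, fun σ hσ hσδ => (hlt hσ ?_).le⟩
  rwa [dist_zero_right, norm_of_nonneg hσ.le]
end

section
/- Let H = {x ∈ ℝ^N : x₁ > 0} and p' ≥ 1. Define Ψ(x,t) = √(p'/(4π)) ∫_{x₁/√t}^∞ e^{-p'σ²/4} dσ. Then for every δ > 0, 4t log Ψ(x,t) = -p' x₁² + O(t log t) as t → 0⁺, uniformly for 0 ≤ x₁ ≤ δ. -/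
/-!
With `b = p'/4` and `a = x₁/√t`, `Ψ` is the normalised Gaussian tail `√(b/π) ∫_a^∞ e^{-bσ²}`.
Shifting the variable and extending to all of `ℝ` bounds the tail by `e^{-ba²}`, so
`4t log Ψ ≤ -p' x₁²`. Keeping only the window `(a, a + √t]` bounds it below by
`√(b/π) √t e^{-b(a+√t)²}`, and since `√t (a + √t) = x₁ + t` this costs only
`4t log √(b/π) + 2t log t - p'(2x₁t + t²)`, which is `O(t |log t|)` for `x₁ ≤ δ`.
-/

open Real MeasureTheory Set Filter

noncomputable def gaussTail (b a : ℝ) : ℝ :=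
  sqrt (b / π) * ∫ σ in Ioi a, exp (-b * σ ^ 2)

section GaussianTail

variable {b : ℝ}

lemma integral_Ioi_exp_neg_mul_sq_le (hb : 0 < b) {a : ℝ} (ha : 0 ≤ a) :
    ∫ σ in Ioi a, exp (-b * σ ^ 2) ≤ exp (-b * a ^ 2) * sqrt (π / b) := by
  have hint := integrable_exp_neg_mul_sq hb
  have hshift : Integrable fun σ : ℝ ↦ exp (-b * a ^ 2) * exp (-b * (σ - a) ^ 2) :=
    (hint.comp_sub_right a).const_mul _
  calc ∫ σ in Ioi a, exp (-b * σ ^ 2)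
      ≤ ∫ σ in Ioi a, exp (-b * a ^ 2) * exp (-b * (σ - a) ^ 2) := by
        refine setIntegral_mono_on hint.integrableOn hshift.integrableOn measurableSet_Ioi
          fun σ (hσ : a < σ) ↦ ?_
        rw [← exp_add, exp_le_exp]
        nlinarith [mul_nonneg (mul_nonneg hb.le ha) (sub_nonneg.2 hσ.le)]
    _ ≤ ∫ σ, exp (-b * a ^ 2) * exp (-b * (σ - a) ^ 2) :=
        setIntegral_le_integral hshift (Eventually.of_forall fun _ ↦ by positivity)
    _ = exp (-b * a ^ 2) * sqrt (π / b) := by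
        rw [integral_const_mul, integral_sub_right_eq_self (fun σ ↦ exp (-b * σ ^ 2)) a,
          integral_gaussian]

lemma mul_exp_neg_mul_sq_le_integral_Ioi (hb : 0 < b) {a s : ℝ} (ha : 0 ≤ a) (hs : 0 ≤ s) :
    s * exp (-b * (a + s) ^ 2) ≤ ∫ σ in Ioi a, exp (-b * σ ^ 2) := by
  have hint := integrable_exp_neg_mul_sq hb
  calc s * exp (-b * (a + s) ^ 2)
      = ∫ _ in Ioc a (a + s), exp (-b * (a + s) ^ 2) := by
        rw [setIntegral_const, measureReal_def, volume_Ioc, smul_eq_mul,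
          ENNReal.toReal_ofReal (by linarith), add_sub_cancel_left]
    _ ≤ ∫ σ in Ioc a (a + s), exp (-b * σ ^ 2) := by
        refine setIntegral_mono_on (integrableOn_const measure_Ioc_lt_top.ne)
          hint.integrableOn measurableSet_Ioc fun σ hσ ↦ ?_
        have hsq : σ ^ 2 ≤ (a + s) ^ 2 := by nlinarith [hσ.1, hσ.2]
        rw [exp_le_exp]
        nlinarith [mul_le_mul_of_nonneg_left hsq hb.le]
    _ ≤ ∫ σ in Ioi a, exp (-b * σ ^ 2) :=
        setIntegral_mono_set hint.integrableOn (Eventually.of_forall fun _ ↦ by positivity)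
          Ioc_subset_Ioi_self.eventuallyLE

lemma gaussTail_le_exp (hb : 0 < b) {a : ℝ} (ha : 0 ≤ a) : gaussTail b a ≤ exp (-b * a ^ 2) := by
  have hnorm : sqrt (b / π) * sqrt (π / b) = 1 := by
    rw [← sqrt_mul (by positivity), div_mul_div_cancel₀' hb.ne', div_self pi_ne_zero, sqrt_one]
  calc gaussTail b a ≤ sqrt (b / π) * (exp (-b * a ^ 2) * sqrt (π / b)) :=
        mul_le_mul_of_nonneg_left (integral_Ioi_exp_neg_mul_sq_le hb ha) (sqrt_nonneg _)
    _ = exp (-b * a ^ 2) := by rw [mul_left_comm, hnorm, mul_one]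

lemma sqrt_mul_exp_le_gaussTail (hb : 0 < b) {a s : ℝ} (ha : 0 ≤ a) (hs : 0 ≤ s) :
    sqrt (b / π) * (s * exp (-b * (a + s) ^ 2)) ≤ gaussTail b a :=
  mul_le_mul_of_nonneg_left (mul_exp_neg_mul_sq_le_integral_Ioi hb ha hs) (sqrt_nonneg _)

lemma gaussTail_pos (hb : 0 < b) {a : ℝ} (ha : 0 ≤ a) : 0 < gaussTail b a :=
  lt_of_lt_of_le (by have := pi_pos; positivity) (sqrt_mul_exp_le_gaussTail hb ha zero_le_one)

variable {x t : ℝ}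

lemma four_mul_log_gaussTail_div_sqrt_le (hb : 0 < b) (hx : 0 ≤ x) (ht : 0 < t) :
    4 * t * log (gaussTail b (x / sqrt t)) ≤ -(4 * b * x ^ 2) := by
  have ha : 0 ≤ x / sqrt t := by positivity
  have hlog : log (gaussTail b (x / sqrt t)) ≤ -b * (x / sqrt t) ^ 2 :=
    (log_le_iff_le_exp (gaussTail_pos hb ha)).2 (gaussTail_le_exp hb ha)
  have hscale : t * (x / sqrt t) ^ 2 = x ^ 2 := by
    rw [div_pow, sq_sqrt ht.le, mul_div_cancel₀ _ ht.ne']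
  nlinarith [mul_le_mul_of_nonneg_left hlog (by positivity : (0 : ℝ) ≤ 4 * t)]

lemma le_four_mul_log_gaussTail_div_sqrt (hb : 0 < b) (hx : 0 ≤ x) (ht : 0 < t) :
    4 * t * log (sqrt (b / π)) + 2 * t * log t - 4 * b * (x + t) ^ 2 ≤
      4 * t * log (gaussTail b (x / sqrt t)) := by
  have hs : 0 < sqrt t := sqrt_pos.2 ht
  have hc : 0 < sqrt (b / π) := sqrt_pos.2 (by have := pi_pos; positivity)
  have ha : 0 ≤ x / sqrt t := by positivity
  have hlog : log (sqrt (b / π)) + log t / 2 - b * (x / sqrt t + sqrt t) ^ 2 ≤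
      log (gaussTail b (x / sqrt t)) := by
    have h := log_le_log (by positivity) (sqrt_mul_exp_le_gaussTail hb ha hs.le)
    rwa [log_mul hc.ne' (by positivity), log_mul hs.ne' (exp_ne_zero _), log_exp, log_sqrt ht.le,
      ← add_assoc, neg_mul, ← sub_eq_add_neg] at h
  have hscale : t * (x / sqrt t + sqrt t) ^ 2 = (x + t) ^ 2 := by
    rw [← sq_sqrt ht.le, ← mul_pow, sq_sqrt ht.le, mul_add, mul_div_cancel₀ _ hs.ne',
      mul_self_sqrt ht.le]
  nlinarith [mul_le_mul_of_nonneg_left hlog (by positivity : (0 : ℝ) ≤ 4 * t)]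

end GaussianTail

lemma one_le_neg_log {t : ℝ} (ht : 0 < t) (ht' : t < exp (-1)) : 1 ≤ -log t := by
  have := (log_lt_iff_lt_exp ht).2 ht'
  linarith

theorem stmt6 (p' δ : ℝ) (hp' : 1 ≤ p') (hδ : 0 < δ) (Ψ : ℝ → ℝ → ℝ)
    (hΨ : ∀ x₁ t : ℝ, Ψ x₁ t = Real.sqrt (p' / (4 * Real.pi)) *
      ∫ σ in Ioi (x₁ / Real.sqrt t), Real.exp (-p' * σ ^ 2 / 4)) :
    ∃ C t₀ : ℝ, 0 < C ∧ 0 < t₀ ∧ ∀ x₁ t : ℝ, 0 ≤ x₁ → x₁ ≤ δ → 0 < t → t < t₀ →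
      |4 * t * Real.log (Ψ x₁ t) + p' * x₁ ^ 2| ≤ C * t * |Real.log t| := by
  have hp : 0 < p' / 4 := by linarith
  have hΨ_eq : ∀ x₁ t, Ψ x₁ t = gaussTail (p' / 4) (x₁ / sqrt t) := fun x₁ t ↦ by
    simp only [hΨ, gaussTail, div_div, neg_mul, neg_div, mul_div_right_comm p']
  set c := log (sqrt (p' / 4 / π))
  refine ⟨4 * |c| + 2 + 2 * p' * δ + p', exp (-1), by positivity, exp_pos _,
    fun x₁ t hx hxδ ht ht₀ ↦ ?_⟩
  have hupper := four_mul_log_gaussTail_div_sqrt_le hp hx ht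
  have hlower := le_four_mul_log_gaussTail_div_sqrt hp hx ht
  rw [← hΨ_eq] at hupper hlower
  have hlog := one_le_neg_log ht ht₀
  have ht1 : t ≤ 1 := ht₀.le.trans (exp_le_one_iff.2 (by norm_num))
  rw [abs_of_nonpos (by linarith), abs_of_neg (by linarith : log t < 0)]
  -- every term of `hlower` is at most its coefficient in `C` times `t |log t|`, as `t ≤ 1 ≤ -log t`
  nlinarith [mul_le_mul_of_nonneg_left (neg_abs_le c) ht.le,
    mul_le_mul_of_nonneg_left hxδ (by positivity : (0 : ℝ) ≤ 2 * p' * t),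
    mul_nonneg (mul_nonneg (abs_nonneg c) ht.le) (sub_nonneg.2 hlog),
    mul_nonneg (mul_nonneg (by positivity : (0 : ℝ) ≤ p' * δ) ht.le) (sub_nonneg.2 hlog),
    mul_nonneg (by positivity : (0 : ℝ) ≤ p' * t) (by linarith : (0 : ℝ) ≤ -log t - t)]
end

section
/- Let p ∈ (1,∞), N ≥ 2, and define u^ε on the closed ball B̄_R ⊂ ℝ^N by u^ε(x) = (∫₀^π e^{√(p') |x| cos θ / ε} (sin θ)^{(N-p)/(p-1)} dθ) / (∫₀^π e^{√(p') R cos θ / ε} (sin θ)^{(N-p)/(p-1)} dθ), where p' = p/(p-1). Then ε log u^ε(x) + √(p') (R − |x|) = O(ε log ε) uniformly on B̄_R as ε → 0⁺. -/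
/-!
With `α = (N - p)/(p - 1) > -1`, numerator and denominator are `P(c) = ∫₀^π e^{c cos θ} sin^α θ dθ`
at `c = √p' r / ε`. Bounding `e^{c cos θ} ≤ e^c` gives `log P(c) ≤ c + O(1)`; keeping only
`θ ∈ [0, ε]`, where `cos θ ≥ 1 - ε²/2` and `sin θ ≍ θ`, gives
`log P(c) ≥ c(1 - ε²/2) + (α + 1) log ε - O(1)`.
Hence `ε log P(√p' r / ε) = √p' r + O(ε |log ε|)` uniformly in `r ∈ [0, R]`, and `ε log u^ε` is the
difference of two such terms.
-/

open Real MeasureTheory Set Filter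

lemma two_div_pi_rpow_abs_mul_rpow_le_sin_rpow (α : ℝ) {θ : ℝ} (h0 : 0 < θ) (hθ : θ ≤ π / 2) :
    (2 / π) ^ |α| * θ ^ α ≤ sin θ ^ α := by
  have hsin : 0 < sin θ := sin_pos_of_pos_of_lt_pi h0 (by linarith [pi_pos])
  rcases le_or_gt 0 α with hα | hα
  · rw [abs_of_nonneg hα, ← mul_rpow (by positivity) h0.le]
    exact rpow_le_rpow (by positivity) (mul_le_sin h0.le hθ) hα
  · have hc : (2 / π) ^ |α| ≤ 1 :=
      rpow_le_one (by positivity) ((div_le_one pi_pos).2 two_le_pi) (abs_nonneg α)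
    calc (2 / π) ^ |α| * θ ^ α ≤ 1 * θ ^ α := by gcongr
      _ ≤ sin θ ^ α := by rw [one_mul]; exact rpow_le_rpow_of_nonpos hsin (sin_le h0.le) hα.le

lemma sin_rpow_le_pi_div_two_rpow_abs_mul_rpow (α : ℝ) {θ : ℝ} (h0 : 0 < θ) (hθ : θ ≤ π / 2) :
    sin θ ^ α ≤ (π / 2) ^ |α| * θ ^ α := by
  have hsin : 0 < sin θ := sin_pos_of_pos_of_lt_pi h0 (by linarith [pi_pos])
  rcases le_or_gt 0 α with hα | hα
  · have hc : 1 ≤ (π / 2) ^ |α| :=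
      one_le_rpow ((one_le_div two_pos).2 two_le_pi) (abs_nonneg α)
    calc sin θ ^ α ≤ 1 * θ ^ α := by rw [one_mul]; exact rpow_le_rpow hsin.le (sin_le h0.le) hα
      _ ≤ (π / 2) ^ |α| * θ ^ α := by gcongr
  · have hc : (π / 2) ^ |α| = (2 / π) ^ α := by
      rw [abs_of_neg hα, rpow_neg (by positivity), ← inv_rpow (by positivity), inv_div]
    rw [hc, ← mul_rpow (by positivity) h0.le]
    exact rpow_le_rpow_of_nonpos (by positivity) (mul_le_sin h0.le hθ) hα.le

lemma intervalIntegrable_sin_rpow {α : ℝ} (hα : -1 < α) :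
    IntervalIntegrable (fun θ => sin θ ^ α) volume 0 π := by
  have hleft : IntervalIntegrable (fun θ => sin θ ^ α) volume 0 (π / 2) := by
    refine ((intervalIntegral.intervalIntegrable_rpow' hα).const_mul ((π / 2) ^ |α|)).mono_fun'
      (continuous_sin.measurable.pow_const α).aestronglyMeasurable ?_
    rw [uIoc_of_le (by positivity)]
    refine (ae_restrict_mem measurableSet_Ioc).mono fun θ hθ => ?_
    dsimp only
    rw [norm_of_nonneg (rpow_nonneg (sin_nonneg_of_nonneg_of_le_pi hθ.1.le
      (by linarith [pi_pos, hθ.2])) α)]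
    exact sin_rpow_le_pi_div_two_rpow_abs_mul_rpow α hθ.1 hθ.2
  have hright : IntervalIntegrable (fun θ => sin θ ^ α) volume (π / 2) π := by
    have h := (hleft.comp_sub_left π).symm
    simp only [sin_pi_sub, sub_zero] at h
    rwa [show π - π / 2 = π / 2 by ring] at h
  exact hleft.trans hright

/-- For `α = 2ν` this is Poisson's integral: a constant multiple of `c^(-ν) I_ν(c)`, with `I_ν` the
modified Bessel function. -/
noncomputable def poissonIntegral (α c : ℝ) : ℝ :=
  ∫ θ in (0 : ℝ)..π, exp (c * cos θ) * sin θ ^ α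

section PoissonIntegral

variable {α : ℝ}

lemma intervalIntegrable_exp_mul_cos_mul_sin_rpow (hα : -1 < α) (c : ℝ) :
    IntervalIntegrable (fun θ => exp (c * cos θ) * sin θ ^ α) volume 0 π :=
  (intervalIntegrable_sin_rpow hα).continuousOn_mul (by fun_prop)

lemma poissonIntegral_pos (hα : -1 < α) (c : ℝ) : 0 < poissonIntegral α c :=
  intervalIntegral.intervalIntegral_pos_of_pos_on
    (intervalIntegrable_exp_mul_cos_mul_sin_rpow hα c)
    (fun _ hθ => mul_pos (exp_pos _) (rpow_pos_of_pos (sin_pos_of_pos_of_lt_pi hθ.1 hθ.2) α))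
    pi_pos

lemma poissonIntegral_le (hα : -1 < α) {c : ℝ} (hc : 0 ≤ c) :
    poissonIntegral α c ≤ exp c * poissonIntegral α 0 := by
  simp only [poissonIntegral, zero_mul, exp_zero, one_mul, ← intervalIntegral.integral_const_mul]
  refine intervalIntegral.integral_mono_on pi_pos.le
    (intervalIntegrable_exp_mul_cos_mul_sin_rpow hα c)
    ((intervalIntegrable_sin_rpow hα).const_mul _) fun θ hθ => ?_
  gcongr
  · exact rpow_nonneg (sin_nonneg_of_nonneg_of_le_pi hθ.1 hθ.2) α
  · exact mul_le_of_le_one_right hc (cos_le_one θ)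

lemma le_poissonIntegral (hα : -1 < α) {c δ : ℝ} (hc : 0 ≤ c) (hδ : 0 < δ) (hδπ : δ ≤ π / 2) :
    exp (c * cos δ) * ((2 / π) ^ |α| / (α + 1)) * δ ^ (α + 1) ≤ poissonIntegral α c := by
  have hint := intervalIntegrable_exp_mul_cos_mul_sin_rpow hα c
  have hδπ' : δ ≤ π := hδπ.trans (by linarith [pi_pos])
  calc exp (c * cos δ) * ((2 / π) ^ |α| / (α + 1)) * δ ^ (α + 1)
      = ∫ θ in (0 : ℝ)..δ, exp (c * cos δ) * (2 / π) ^ |α| * θ ^ α := by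
        rw [intervalIntegral.integral_const_mul, integral_rpow (Or.inl hα),
          zero_rpow (by linarith)]
        ring
    _ ≤ ∫ θ in (0 : ℝ)..δ, exp (c * cos θ) * sin θ ^ α := by
        refine intervalIntegral.integral_mono_on_of_le_Ioo hδ.le
          ((intervalIntegral.intervalIntegrable_rpow' hα).const_mul _)
          (hint.mono_set (uIcc_subset_uIcc_left
            (by rw [uIcc_of_le pi_pos.le]; exact ⟨hδ.le, hδπ'⟩)))
          fun θ hθ => ?_
        rw [mul_assoc]
        gcongr
        · exact mul_nonneg (by positivity) (rpow_nonneg hθ.1.le α)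
        · exact cos_le_cos_of_nonneg_of_le_pi hθ.1.le hδπ' hθ.2.le
        · exact two_div_pi_rpow_abs_mul_rpow_le_sin_rpow α hθ.1 (by linarith [hθ.2])
    _ ≤ poissonIntegral α c :=
        intervalIntegral.integral_mono_interval le_rfl hδ.le hδπ'
          ((ae_restrict_mem measurableSet_Ioc).mono fun θ hθ => mul_nonneg (exp_pos _).le
            (rpow_nonneg (sin_nonneg_of_nonneg_of_le_pi hθ.1.le hθ.2) α)) hint

lemma mul_log_poissonIntegral_le (hα : -1 < α) {a ε : ℝ} (ha : 0 ≤ a) (hε : 0 < ε) :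
    ε * log (poissonIntegral α (a / ε)) ≤ a + ε * log (poissonIntegral α 0) := by
  have h := log_le_log (poissonIntegral_pos hα _)
    (poissonIntegral_le hα (by positivity : 0 ≤ a / ε))
  rw [log_mul (exp_ne_zero _) (poissonIntegral_pos hα 0).ne', log_exp] at h
  calc ε * log (poissonIntegral α (a / ε)) ≤ ε * (a / ε + log (poissonIntegral α 0)) := by gcongr
    _ = a + ε * log (poissonIntegral α 0) := by field_simp

lemma le_mul_log_poissonIntegral (hα : -1 < α) {a ε : ℝ} (ha : 0 ≤ a) (hε : 0 < ε)
    (hεπ : ε ≤ π / 2) :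
    a - a * ε ^ 2 / 2 + (α + 1) * (ε * log ε) + ε * log ((2 / π) ^ |α| / (α + 1)) ≤
      ε * log (poissonIntegral α (a / ε)) := by
  have hK : 0 < (2 / π) ^ |α| / (α + 1) := div_pos (by positivity) (by linarith)
  have h := log_le_log (by positivity) (le_poissonIntegral hα (by positivity : 0 ≤ a / ε) hε hεπ)
  rw [log_mul (by positivity) (by positivity), log_mul (exp_ne_zero _) hK.ne', log_exp,
    log_rpow hε] at h
  have hcos : a * (1 - ε ^ 2 / 2) ≤ a * cos ε := by gcongr; exact one_sub_sq_div_two_le_cos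
  calc a - a * ε ^ 2 / 2 + (α + 1) * (ε * log ε) + ε * log ((2 / π) ^ |α| / (α + 1))
      ≤ ε * (a / ε * cos ε + log ((2 / π) ^ |α| / (α + 1)) + (α + 1) * log ε) := by
        field_simp
        nlinarith
    _ ≤ ε * log (poissonIntegral α (a / ε)) := by gcongr

lemma exists_abs_mul_log_poissonIntegral_sub_le (hα : -1 < α) (A : ℝ) :
    ∃ C, 0 < C ∧ ∀ a ε : ℝ, 0 ≤ a → a ≤ A → 0 < ε → ε < exp (-1) →
      |ε * log (poissonIntegral α (a / ε)) - a| ≤ C * ε * |log ε| := by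
  set L₀ := log (poissonIntegral α 0)
  set L₁ := log ((2 / π) ^ |α| / (α + 1))
  refine ⟨|L₀| + |L₁| + |A| / 2 + (α + 1), add_pos_of_nonneg_of_pos (by positivity) (by linarith),
    fun a ε ha haA hε hε₀ => ?_⟩
  have hε1 : ε < 1 := hε₀.trans (exp_lt_one_iff.2 (by norm_num))
  have hlog : log ε < -1 := by simpa using log_lt_log hε hε₀
  have hup : ε * log (poissonIntegral α (a / ε)) ≤ a + ε * L₀ :=
    mul_log_poissonIntegral_le hα ha hε
  have hlow : a - a * ε ^ 2 / 2 + (α + 1) * (ε * log ε) + ε * L₁ ≤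
      ε * log (poissonIntegral α (a / ε)) :=
    le_mul_log_poissonIntegral hα ha hε (by linarith [pi_gt_three])
  rw [abs_of_neg (by linarith : log ε < 0)]
  have hε_le : ε ≤ ε * -log ε := by nlinarith
  have hsq_le : a * ε ^ 2 ≤ |A| * (ε * -log ε) :=
    calc a * ε ^ 2 ≤ |A| * ε ^ 2 := by gcongr; exact haA.trans (le_abs_self A)
      _ ≤ |A| * ε := by gcongr; nlinarith
      _ ≤ |A| * (ε * -log ε) := by gcongr
  have hL : ∀ L : ℝ, |ε * L| ≤ |L| * (ε * -log ε) := fun L => by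
    rw [abs_mul, abs_of_pos hε, mul_comm]; exact mul_le_mul_of_nonneg_left hε_le (abs_nonneg _)
  rw [abs_le]
  have hlog_nonneg : 0 ≤ ε * -log ε := hε.le.trans hε_le
  constructor <;> linarith [abs_le.1 (hL L₀), abs_le.1 (hL L₁),
    mul_nonneg (abs_nonneg L₀) hlog_nonneg, mul_nonneg (abs_nonneg L₁) hlog_nonneg,
    mul_nonneg (abs_nonneg A) hlog_nonneg, mul_nonneg (by linarith : 0 ≤ α + 1) hlog_nonneg]

end PoissonIntegral

theorem stmt8_general (N : ℕ) (hN : 2 ≤ N) (p R : ℝ) (hp : 1 < p)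
    (p' : ℝ)
    (u : ℝ → EuclideanSpace ℝ (Fin N) → ℝ)
    (hu : ∀ (ε : ℝ) (x : EuclideanSpace ℝ (Fin N)), u ε x =
      (∫ θ in (0:ℝ)..Real.pi,
          Real.exp (Real.sqrt p' * ‖x‖ * Real.cos θ / ε) *
            Real.sin θ ^ (((N : ℝ) - p) / (p - 1))) /
      (∫ θ in (0:ℝ)..Real.pi,
          Real.exp (Real.sqrt p' * R * Real.cos θ / ε) *
            Real.sin θ ^ (((N : ℝ) - p) / (p - 1)))) :
    ∃ C ε₀ : ℝ, 0 < C ∧ 0 < ε₀ ∧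
      ∀ (ε : ℝ) (x : EuclideanSpace ℝ (Fin N)), 0 < ε → ε < ε₀ → ‖x‖ ≤ R →
        |ε * Real.log (u ε x) + Real.sqrt p' * (R - ‖x‖)| ≤ C * ε * |Real.log ε| := by
  set α := ((N : ℝ) - p) / (p - 1)
  have hα : -1 < α := by
    rw [lt_div_iff₀ (by linarith)]
    linarith [show (2 : ℝ) ≤ N by exact_mod_cast hN]
  obtain ⟨C, hC, hbound⟩ := exists_abs_mul_log_poissonIntegral_sub_le hα (√p' * R)
  refine ⟨2 * C, exp (-1), by positivity, exp_pos _, fun ε x hε hε₀ hx => ?_⟩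
  have hP : ∀ r, ∫ θ in (0 : ℝ)..π, exp (√p' * r * cos θ / ε) * sin θ ^ α =
      poissonIntegral α (√p' * r / ε) := fun r => by
    simp only [poissonIntegral, mul_div_right_comm _ (cos _)]
  have hx₀ : 0 ≤ √p' * ‖x‖ := by positivity
  have hxR : √p' * ‖x‖ ≤ √p' * R := by gcongr
  rw [hu, hP, hP, log_div (poissonIntegral_pos hα _).ne' (poissonIntegral_pos hα _).ne']
  calc |ε * (log (poissonIntegral α (√p' * ‖x‖ / ε)) - log (poissonIntegral α (√p' * R / ε)))
        + √p' * (R - ‖x‖)|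
      = |(ε * log (poissonIntegral α (√p' * ‖x‖ / ε)) - √p' * ‖x‖)
          - (ε * log (poissonIntegral α (√p' * R / ε)) - √p' * R)| := by congr 1; ring
    _ ≤ C * ε * |log ε| + C * ε * |log ε| :=
        (abs_sub _ _).trans (add_le_add (hbound _ _ hx₀ hxR hε hε₀)
          (hbound _ _ (hx₀.trans hxR) le_rfl hε hε₀))
    _ = 2 * C * ε * |log ε| := by ring

theorem stmt8 (N : ℕ) (hN : 2 ≤ N) (p R : ℝ) (hp : 1 < p) (hR : 0 < R)
    (p' : ℝ) (hp' : p' = p / (p - 1))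
    (u : ℝ → EuclideanSpace ℝ (Fin N) → ℝ)
    (hu : ∀ (ε : ℝ) (x : EuclideanSpace ℝ (Fin N)), u ε x =
      (∫ θ in (0:ℝ)..Real.pi,
          Real.exp (Real.sqrt p' * ‖x‖ * Real.cos θ / ε) *
            Real.sin θ ^ (((N : ℝ) - p) / (p - 1))) /
      (∫ θ in (0:ℝ)..Real.pi,
          Real.exp (Real.sqrt p' * R * Real.cos θ / ε) *
            Real.sin θ ^ (((N : ℝ) - p) / (p - 1)))) :
    ∃ C ε₀ : ℝ, 0 < C ∧ 0 < ε₀ ∧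
      ∀ (ε : ℝ) (x : EuclideanSpace ℝ (Fin N)), 0 < ε → ε < ε₀ → ‖x‖ ≤ R →
        |ε * Real.log (u ε x) + Real.sqrt p' * (R - ‖x‖)| ≤ C * ε * |Real.log ε| :=
  stmt8_general N hN p R hp p' u hu
end

section
/- Let p' ≥ 1 and define u^ε on B̄_R ⊂ ℝ^N by u^ε(x) = cosh(|x|/ε)/cosh(R/ε). Then 0 ≤ ε log u^ε(x) + (R − |x|) ≤ ε log 2 for all x ∈ B̄_R and all ε > 0; in particular ε log u^ε + d_Γ = O(ε) uniformly on B̄_R. -/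
/-!
Write `a = |x|/ε ≤ b = R/ε`, so that `ε log u^ε(x) + (R - |x|) = ε ((b - a) - (log cosh b - log cosh a))`.
The lower bound is the 1-Lipschitz property of `log ∘ cosh`; the upper bound follows from
`e^t / 2 ≤ cosh t ≤ e^|t|`, which gives `log cosh b - log cosh a ≥ (b - log 2) - a` once `a ≥ 0`.
-/

open Real MeasureTheory Set Filter

namespace Real

theorem cosh_le_exp_abs (x : ℝ) : cosh x ≤ exp |x| := by
  rw [cosh_eq]
  have hx : exp x ≤ exp |x| := exp_le_exp.mpr (le_abs_self x)
  have hnx : exp (-x) ≤ exp |x| := exp_le_exp.mpr (neg_le_abs x)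
  linarith

theorem exp_le_two_mul_cosh (x : ℝ) : exp x ≤ 2 * cosh x := by
  rw [cosh_eq]
  linarith [exp_pos (-x)]

/-- `exp (b - a) * cosh a = (exp b + exp (b - 2a)) / 2`, and `b - 2a ≥ -b`. -/
theorem cosh_le_exp_sub_mul_cosh {a b : ℝ} (h : a ≤ b) : cosh b ≤ exp (b - a) * cosh a := by
  have hexp : exp (b - a) * cosh a = (exp b + exp (b - 2 * a)) / 2 := by
    rw [cosh_eq, mul_div_assoc', mul_add, ← exp_add, ← exp_add]
    ring_nf
  rw [hexp, cosh_eq]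
  have : exp (-b) ≤ exp (b - 2 * a) := exp_le_exp.mpr (by linarith)
  linarith

theorem log_cosh_le_abs (x : ℝ) : log (cosh x) ≤ |x| :=
  (log_le_log (cosh_pos x) (cosh_le_exp_abs x)).trans_eq (log_exp _)

theorem sub_log_two_le_log_cosh (x : ℝ) : x - log 2 ≤ log (cosh x) := by
  have h := log_le_log (exp_pos x) (exp_le_two_mul_cosh x)
  rw [log_exp, log_mul two_ne_zero (cosh_pos x).ne'] at h
  linarith

theorem log_cosh_sub_log_cosh_le {a b : ℝ} (h : a ≤ b) :
    log (cosh b) - log (cosh a) ≤ b - a := by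
  have h' := log_le_log (cosh_pos b) (cosh_le_exp_sub_mul_cosh h)
  rw [log_mul (exp_pos _).ne' (cosh_pos a).ne', log_exp] at h'
  linarith

theorem log_cosh_div_cosh_add_sub_mem_Icc {a b : ℝ} (ha : 0 ≤ a) (hab : a ≤ b) :
    log (cosh a / cosh b) + (b - a) ∈ Icc 0 (log 2) := by
  rw [log_div (cosh_pos a).ne' (cosh_pos b).ne']
  have hlip := log_cosh_sub_log_cosh_le hab
  have hupper := log_cosh_le_abs a
  have hlower := sub_log_two_le_log_cosh b
  rw [abs_of_nonneg ha] at hupper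
  constructor <;> linarith

end Real

theorem mul_log_cosh_div_cosh_add_sub_mem_Icc {ε r R : ℝ} (hε : 0 < ε) (hr : 0 ≤ r)
    (hrR : r ≤ R) :
    ε * log (cosh (r / ε) / cosh (R / ε)) + (R - r) ∈ Icc 0 (ε * log 2) := by
  have hscale : ε * log (cosh (r / ε) / cosh (R / ε)) + (R - r)
      = ε * (log (cosh (r / ε) / cosh (R / ε)) + (R / ε - r / ε)) := by
    field_simp
  obtain ⟨h0, h2⟩ := log_cosh_div_cosh_add_sub_mem_Icc (div_nonneg hr hε.le)
    (div_le_div_of_nonneg_right hrR hε.le)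
  rw [hscale]
  exact ⟨mul_nonneg hε.le h0, mul_le_mul_of_nonneg_left h2 hε.le⟩

theorem stmt9_general (N : ℕ) (R : ℝ)
    (u : ℝ → EuclideanSpace ℝ (Fin N) → ℝ)
    (hu : ∀ (ε : ℝ) (x : EuclideanSpace ℝ (Fin N)),
      u ε x = Real.cosh (‖x‖ / ε) / Real.cosh (R / ε)) :
    ∀ (x : EuclideanSpace ℝ (Fin N)), ‖x‖ ≤ R → ∀ ε : ℝ, 0 < ε →
      0 ≤ ε * Real.log (u ε x) + (R - ‖x‖) ∧
      ε * Real.log (u ε x) + (R - ‖x‖) ≤ ε * Real.log 2 := by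
  intro x hx ε hε
  rw [hu]
  exact mul_log_cosh_div_cosh_add_sub_mem_Icc hε (norm_nonneg x) hx

theorem stmt9 (N : ℕ) (hN : 2 ≤ N) (R p' : ℝ) (hR : 0 < R) (hp' : 1 ≤ p')
    (u : ℝ → EuclideanSpace ℝ (Fin N) → ℝ)
    (hu : ∀ (ε : ℝ) (x : EuclideanSpace ℝ (Fin N)),
      u ε x = Real.cosh (‖x‖ / ε) / Real.cosh (R / ε)) :
    ∀ (x : EuclideanSpace ℝ (Fin N)), ‖x‖ ≤ R → ∀ ε : ℝ, 0 < ε →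
      0 ≤ ε * Real.log (u ε x) + (R - ‖x‖) ∧
      ε * Real.log (u ε x) + (R - ‖x‖) ≤ ε * Real.log 2 :=
  stmt9_general N R u hu
end

section
/- Let p ∈ (1,∞), α = (N-p)/(p-1), and for R' > R > 0 define on the annulus {R ≤ |x| ≤ R'} the function u^ε(x) = (∫₀^∞ e^{-√(p')|x|cosh θ/ε}(sinh θ)^α dθ)/(∫₀^∞ e^{-√(p') R cosh θ/ε}(sinh θ)^α dθ). Then ε log u^ε(x) + √(p')(|x| − R) = O(ε) uniformly for R ≤ |x| ≤ R' as ε → 0⁺. -/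
open Real MeasureTheory Set Filter

/-!
The substitution `t = cosh θ - 1` turns `∫₀^∞ e^{-s cosh θ} sinh^α θ dθ` into `e^{-s} K(s)`, where
`K` is the Laplace transform of the weight `w(t) = (t(t+2))^{(α-1)/2}`. Hence
`ε log u^ε(x) + √p' (|x| - R) = ε log (K(s₁) / K(s₂))` with `s₁ = √p'|x|/ε ≥ s₂ = √p' R/ε`.
Now `K` is decreasing, while the rescaling `t ↦ λt` and the growth bound
`w(λt) ≤ λ^{|α-1|} w(t)` for `λ ≥ 1` give `K(s₂) ≤ λ^{1+|α-1|} K(s₁)` with `λ = s₁/s₂ ≤ R'/R`.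
So `log (K(s₁) / K(s₂))` stays bounded as `ε → 0`.
-/

noncomputable def laplaceIoi (w : ℝ → ℝ) (s : ℝ) : ℝ :=
  ∫ t in Ioi 0, exp (-(s * t)) * w t

section Laplace

variable {w : ℝ → ℝ}

lemma laplaceIoi_pos {s : ℝ} (hw : ∀ t ∈ Ioi (0:ℝ), 0 < w t)
    (hint : IntegrableOn (fun t => exp (-(s * t)) * w t) (Ioi 0)) : 0 < laplaceIoi w s := by
  have hsupp : Function.support (fun t => exp (-(s * t)) * w t) ∩ Ioi 0 = Ioi 0 :=
    inter_eq_right.mpr fun t ht => (mul_pos (exp_pos _) (hw t ht)).ne'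
  rw [laplaceIoi, setIntegral_pos_iff_support_of_nonneg_ae _ hint, hsupp]
  · simp
  · filter_upwards [ae_restrict_mem measurableSet_Ioi] with t ht
    exact (mul_pos (exp_pos _) (hw t ht)).le

lemma laplaceIoi_le_of_le {s₁ s₂ : ℝ} (hw : ∀ t ∈ Ioi (0:ℝ), 0 ≤ w t)
    (hint : IntegrableOn (fun t => exp (-(s₂ * t)) * w t) (Ioi 0)) (h : s₂ ≤ s₁) :
    laplaceIoi w s₁ ≤ laplaceIoi w s₂ := by
  refine integral_mono_of_nonneg ?_ hint ?_ <;>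
    filter_upwards [ae_restrict_mem measurableSet_Ioi] with t (ht : 0 < t)
  · exact mul_nonneg (exp_pos _).le (hw t ht)
  · exact mul_le_mul_of_nonneg_right (exp_le_exp.mpr (by nlinarith)) (hw t ht)

lemma laplaceIoi_le_mul_laplaceIoi_mul {s c C : ℝ} (hc : 0 < c)
    (hw : ∀ t ∈ Ioi (0:ℝ), 0 ≤ w t) (hgrowth : ∀ t ∈ Ioi (0:ℝ), w (c * t) ≤ C * w t)
    (hint : IntegrableOn (fun t => exp (-((c * s) * t)) * w t) (Ioi 0)) :
    laplaceIoi w s ≤ c * C * laplaceIoi w (c * s) := by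
  have hscale : laplaceIoi w s = c * ∫ t in Ioi 0, exp (-((c * s) * t)) * w (c * t) := by
    have := integral_comp_mul_left_Ioi' (fun t => exp (-(s * t)) * w t) 0 hc
    rw [mul_zero] at this
    simp only [laplaceIoi, ← this, smul_eq_mul, mul_left_comm s c, mul_assoc]
  rw [hscale, mul_assoc, laplaceIoi, ← integral_const_mul C]
  refine mul_le_mul_of_nonneg_left (integral_mono_of_nonneg ?_ (hint.const_mul C) ?_) hc.le <;>
    filter_upwards [ae_restrict_mem measurableSet_Ioi] with t (ht : 0 < t)
  · exact mul_nonneg (exp_pos _).le (hw _ (mul_pos hc ht))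
  · rw [mul_left_comm]
    exact mul_le_mul_of_nonneg_left (hgrowth t ht) (exp_pos _).le

lemma abs_log_laplaceIoi_div_le {s₁ s₂ κ : ℝ} (hw : ∀ t ∈ Ioi (0:ℝ), 0 < w t)
    (hgrowth : ∀ c ≥ 1, ∀ t ∈ Ioi (0:ℝ), w (c * t) ≤ c ^ κ * w t)
    (hint₁ : IntegrableOn (fun t => exp (-(s₁ * t)) * w t) (Ioi 0))
    (hint₂ : IntegrableOn (fun t => exp (-(s₂ * t)) * w t) (Ioi 0))
    (hs₂ : 0 < s₂) (h : s₂ ≤ s₁) :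
    |log (laplaceIoi w s₁ / laplaceIoi w s₂)| ≤ (1 + κ) * log (s₁ / s₂) := by
  set c := s₁ / s₂
  have hc : 1 ≤ c := (one_le_div hs₂).mpr h
  have hcs : c * s₂ = s₁ := div_mul_cancel₀ _ hs₂.ne'
  have hK₁ := laplaceIoi_pos hw hint₁
  have hK₂ := laplaceIoi_pos hw hint₂
  have hanti : laplaceIoi w s₁ ≤ laplaceIoi w s₂ :=
    laplaceIoi_le_of_le (fun t ht => (hw t ht).le) hint₂ h
  have hscale : laplaceIoi w s₂ ≤ c ^ (1 + κ) * laplaceIoi w s₁ := by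
    have := laplaceIoi_le_mul_laplaceIoi_mul (by linarith) (fun t ht => (hw t ht).le)
      (hgrowth c hc) (hcs ▸ hint₁)
    rwa [rpow_add (by linarith), rpow_one, ← hcs]
  have hlog_anti := log_le_log hK₁ hanti
  have hlog_scale := log_le_log hK₂ hscale
  rw [log_mul (by positivity) hK₁.ne', log_rpow (by linarith)] at hlog_scale
  rw [abs_le, log_div hK₁.ne' hK₂.ne']
  constructor <;> nlinarith [log_nonneg hc]

end Laplace

lemma rpow_le_rpow_abs_mul_rpow {x y L γ : ℝ} (hx : 0 < x) (hxy : x ≤ y) (hyL : y ≤ L * x) :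
    y ^ γ ≤ L ^ |γ| * x ^ γ := by
  have hz : 1 ≤ y / x := (one_le_div hx).mpr hxy
  calc y ^ γ = (y / x) ^ γ * x ^ γ := by
        rw [← mul_rpow (by positivity) hx.le, div_mul_cancel₀ _ hx.ne']
    _ ≤ (y / x) ^ |γ| * x ^ γ := by
        gcongr
        exact le_abs_self γ
    _ ≤ L ^ |γ| * x ^ γ := by
        gcongr
        exact (div_le_iff₀ hx).mpr hyL

lemma mul_add_two_rpow_le {γ c t : ℝ} (hc : 1 ≤ c) (ht : 0 < t) :
    (c * t * (c * t + 2)) ^ γ ≤ c ^ (2 * |γ|) * (t * (t + 2)) ^ γ := by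
  rw [rpow_mul (by linarith), rpow_two]
  have hct : 0 ≤ (c - 1) * t := mul_nonneg (by linarith) ht.le
  exact rpow_le_rpow_abs_mul_rpow (by positivity) (by nlinarith) (by nlinarith)

lemma add_two_rpow_le_exp {γ t : ℝ} (ht : 0 ≤ t) : (t + 2) ^ γ ≤ exp (|γ| * (t + 1)) := by
  have := rpow_le_rpow_abs_mul_rpow (γ := γ) one_pos (by linarith : 1 ≤ t + 2)
    (by linarith [add_one_le_exp (t + 1)] : t + 2 ≤ exp (t + 1) * 1)
  rwa [one_rpow, mul_one, ← exp_mul, mul_comm] at this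

lemma integrableOn_exp_neg_mul_mul_add_two_rpow {γ s : ℝ} (hγ : -1 < γ) (hs : |γ| < s) :
    IntegrableOn (fun t => exp (-(s * t)) * (t * (t + 2)) ^ γ) (Ioi 0) := by
  have hdom : IntegrableOn (fun t : ℝ => exp |γ| * (t ^ γ * exp (-(s - |γ|) * t ^ (1:ℝ))))
      (Ioi 0) :=
    (integrableOn_rpow_mul_exp_neg_mul_rpow hγ one_pos (by linarith)).const_mul _
  refine hdom.mono' (by fun_prop : Measurable _).aestronglyMeasurable ?_
  filter_upwards [ae_restrict_mem measurableSet_Ioi] with t (ht : 0 < t)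
  have hexp : exp (-(s * t)) * exp (|γ| * (t + 1)) = exp |γ| * exp (-(s - |γ|) * t) := by
    rw [← exp_add, ← exp_add]; ring_nf
  rw [norm_of_nonneg (by positivity), mul_rpow ht.le (by linarith), rpow_one]
  calc exp (-(s * t)) * (t ^ γ * (t + 2) ^ γ)
      ≤ exp (-(s * t)) * (t ^ γ * exp (|γ| * (t + 1))) := by
        gcongr
        exact add_two_rpow_le_exp ht.le
    _ = exp |γ| * (t ^ γ * exp (-(s - |γ|) * t)) := by
        linear_combination t ^ γ * hexp

lemma image_cosh_sub_one_Ioi : (fun θ => cosh θ - 1) '' Ioi 0 = Ioi 0 := by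
  have hcosh : cosh '' Ioi 0 = Ioi 1 := coshOpenPartialHomeomorph.image_source_eq_target
  rw [← image_image (· - 1) cosh, hcosh]
  simp

lemma integral_exp_neg_mul_cosh_mul_sinh_rpow (α s : ℝ) :
    ∫ θ in Ioi 0, exp (-(s * cosh θ)) * sinh θ ^ α
      = exp (-s) * laplaceIoi (fun t => (t * (t + 2)) ^ ((α - 1) / 2)) s := by
  have hderiv : ∀ θ ∈ Ioi (0:ℝ), HasDerivWithinAt (fun θ => cosh θ - 1) (sinh θ) (Ioi 0) θ :=
    fun θ _ => ((hasDerivAt_cosh θ).sub_const 1).hasDerivWithinAt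
  have hinj : InjOn (fun θ => cosh θ - 1) (Ioi 0) := fun a ha b hb hab =>
    cosh_injOn (Ioi_subset_Ici_self ha) (Ioi_subset_Ici_self hb) (by simpa using hab)
  have hcov := integral_image_eq_integral_abs_deriv_smul measurableSet_Ioi hderiv hinj
    (fun t => exp (-(s * t)) * (t * (t + 2)) ^ ((α - 1) / 2))
  rw [image_cosh_sub_one_Ioi] at hcov
  rw [laplaceIoi, hcov, ← integral_const_mul]
  refine setIntegral_congr_fun measurableSet_Ioi fun θ (hθ : 0 < θ) => ?_
  have hsinh : 0 < sinh θ := sinh_pos_iff.mpr hθ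
  have hsq : (cosh θ - 1) * (cosh θ - 1 + 2) = sinh θ ^ 2 := by linear_combination cosh_sq θ
  have hpow : sinh θ ^ α = sinh θ * (sinh θ ^ 2) ^ ((α - 1) / 2) := by
    calc sinh θ ^ α = sinh θ ^ (1 + 2 * ((α - 1) / 2)) := by ring_nf
      _ = sinh θ * (sinh θ ^ 2) ^ ((α - 1) / 2) := by
        rw [rpow_add hsinh, rpow_one, rpow_mul hsinh.le, rpow_two]
  have hexp : exp (-s) * exp (-(s * (cosh θ - 1))) = exp (-(s * cosh θ)) := by
    rw [← exp_add]; ring_nf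
  simp only [smul_eq_mul, abs_of_pos hsinh, hsq, hpow, ← hexp]
  ring

/-- For `α = 2ν > -1` this is `Γ(ν + 1/2) (2/s)^ν / √π` times the modified Bessel function
`K_ν(s)`. -/
noncomputable def besselIntegral (α s : ℝ) : ℝ :=
  ∫ θ in Ioi 0, exp (-(s * cosh θ)) * sinh θ ^ α

lemma abs_log_besselIntegral_div_add_sub_le {α s₁ s₂ : ℝ} (hα : -1 < α)
    (hs₂ : |(α - 1) / 2| < s₂) (h : s₂ ≤ s₁) :
    |log (besselIntegral α s₁ / besselIntegral α s₂) + (s₁ - s₂)|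
      ≤ (1 + 2 * |(α - 1) / 2|) * log (s₁ / s₂) := by
  have hγ : -1 < (α - 1) / 2 := by linarith
  have hw : ∀ t ∈ Ioi (0:ℝ), 0 < (t * (t + 2)) ^ ((α - 1) / 2) :=
    fun t (ht : 0 < t) => by positivity
  have hint₁ := integrableOn_exp_neg_mul_mul_add_two_rpow hγ (hs₂.trans_le h)
  have hint₂ := integrableOn_exp_neg_mul_mul_add_two_rpow hγ hs₂
  have hK₁ := laplaceIoi_pos hw hint₁
  have hK₂ := laplaceIoi_pos hw hint₂
  have hlaplace := abs_log_laplaceIoi_div_le hw (fun c hc t ht => mul_add_two_rpow_le hc ht)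
    hint₁ hint₂ ((abs_nonneg _).trans_lt hs₂) h
  simp only [besselIntegral, integral_exp_neg_mul_cosh_mul_sinh_rpow]
  rw [mul_div_mul_comm, ← exp_sub, log_mul (exp_pos _).ne' (div_pos hK₁ hK₂).ne', log_exp]
  convert hlaplace using 2
  ring

theorem stmt10 (N : ℕ) (hN : 2 ≤ N) (p R R' : ℝ) (hp : 1 < p) (hR : 0 < R) (hRR' : R < R')
    (α p' : ℝ) (hα : α = ((N : ℝ) - p) / (p - 1)) (hp' : p' = p / (p - 1))
    (u : ℝ → EuclideanSpace ℝ (Fin N) → ℝ)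
    (hu : ∀ (ε : ℝ) (x : EuclideanSpace ℝ (Fin N)), u ε x =
      (∫ θ in Ioi (0:ℝ),
          Real.exp (-(Real.sqrt p' * ‖x‖ * Real.cosh θ) / ε) * Real.sinh θ ^ α) /
      (∫ θ in Ioi (0:ℝ),
          Real.exp (-(Real.sqrt p' * R * Real.cosh θ) / ε) * Real.sinh θ ^ α)) :
    ∃ C ε₀ : ℝ, 0 < C ∧ 0 < ε₀ ∧
      ∀ (ε : ℝ) (x : EuclideanSpace ℝ (Fin N)), 0 < ε → ε < ε₀ →
        R ≤ ‖x‖ → ‖x‖ ≤ R' →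
        |ε * Real.log (u ε x) + Real.sqrt p' * (‖x‖ - R)| ≤ C * ε := by
  set a := √p'
  have ha : 0 < a := sqrt_pos.mpr (by rw [hp']; exact div_pos (by linarith) (by linarith))
  have hα1 : -1 < α := by
    have hN' : (2:ℝ) ≤ N := by exact_mod_cast hN
    rw [hα, lt_div_iff₀ (by linarith)]
    linarith
  refine ⟨(1 + 2 * |(α - 1) / 2|) * log (R' / R), a * R / (|(α - 1) / 2| + 1),
    mul_pos (by positivity) (log_pos ((one_lt_div hR).mpr hRR')), by positivity, ?_⟩
  intro ε x hε hεε₀ hRx hxR'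
  have hs₂ : |(α - 1) / 2| < a * R / ε := by
    rw [lt_div_iff₀ hε]
    rw [lt_div_iff₀ (by positivity)] at hεε₀
    nlinarith [abs_nonneg ((α - 1) / 2)]
  have hI : ∀ r, (∫ θ in Ioi (0:ℝ), exp (-(a * r * cosh θ) / ε) * sinh θ ^ α)
      = besselIntegral α (a * r / ε) := fun r => by
    unfold besselIntegral
    congr 1; ext θ; congr 2; ring
  have key := abs_log_besselIntegral_div_add_sub_le hα1 hs₂
    (by gcongr : a * R / ε ≤ a * ‖x‖ / ε)
  rw [show a * ‖x‖ / ε / (a * R / ε) = ‖x‖ / R by field_simp] at key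
  calc |ε * log (u ε x) + a * (‖x‖ - R)|
      = |ε * (log (besselIntegral α (a * ‖x‖ / ε) / besselIntegral α (a * R / ε))
          + (a * ‖x‖ / ε - a * R / ε))| := by
        rw [hu, hI, hI]
        field_simp
    _ = ε * |log (besselIntegral α (a * ‖x‖ / ε) / besselIntegral α (a * R / ε))
          + (a * ‖x‖ / ε - a * R / ε)| := by
        rw [abs_mul, abs_of_pos hε]
    _ ≤ ε * ((1 + 2 * |(α - 1) / 2|) * log (‖x‖ / R)) := by gcongr
    _ ≤ (1 + 2 * |(α - 1) / 2|) * log (R' / R) * ε := by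
        have : 0 < ‖x‖ / R := div_pos (hR.trans_le hRx) hR
        rw [mul_comm]
        gcongr
end
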